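/- Let P be an integer such that P² + 4 is squarefree, and set A = P² + 2 and B = −P⁴ − 4P² + 1. For every positive integer n with n > (|A| + |B|)³, if σ₂(n) − n² = A·n + B (as integers), then there exists an integer k ≥ 0 such that n = V_{2k}(P,−1) · V_{2k+2}(P,−1), where both V_{2k}(P,−1) and V_{2k+2}(P,−1) are prime numbers. -/
import Mathlib

def lucasV (P Q : ℤ) : ℕ → ℤ
  | 0 => 2
  | 1 => P
  | n + 2 => P * lucasV P Q (n + 1) - Q * lucasV P Q n

namespace StmtAux

/-- companion Lucas U sequence for Q = -1 -/
def lucasU (P : ℤ) : ℕ → ℤ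
  | 0 => 0
  | 1 => 1
  | n + 2 => P * lucasU P (n + 1) + lucasU P n

local notation "V" => fun (P : ℤ) (n : ℕ) => lucasV P (-1) n
local notation "U" => lucasU

lemma V0 (P : ℤ) : lucasV P (-1) 0 = 2 := rfl
lemma V1 (P : ℤ) : lucasV P (-1) 1 = P := rfl
lemma Vrec (P : ℤ) (n : ℕ) :
    lucasV P (-1) (n + 2) = P * lucasV P (-1) (n + 1) + lucasV P (-1) n := by
  show P * lucasV P (-1) (n + 1) - (-1) * lucasV P (-1) n = _
  ring

lemma Urec (P : ℤ) (n : ℕ) :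
    lucasU P (n + 2) = P * lucasU P (n + 1) + lucasU P n := rfl

/-- half identity: 2 V(n+1) = P V n + (P^2+4) U n -/
lemma halfV (P : ℤ) : ∀ n : ℕ,
    2 * lucasV P (-1) (n + 1) = P * lucasV P (-1) n + (P ^ 2 + 4) * lucasU P n := by
  intro n
  induction n using Nat.twoStepInduction with
  | zero => simp [V0, V1, lucasU]; ring
  | one =>
      show 2 * lucasV P (-1) 2 = P * lucasV P (-1) 1 + (P ^ 2 + 4) * lucasU P 1
      rw [Vrec, V0, V1]; simp [lucasU]; ring
  | more m ih1 ih2 =>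
      have hr : lucasV P (-1) (m+1+1) = P * lucasV P (-1) (m+1) + lucasV P (-1) m := Vrec P m
      rw [show m + 2 + 1 = (m + 1) + 2 from rfl, Vrec, Urec]
      linear_combination P * ih2 + ih1 - P * hr

lemma halfU (P : ℤ) : ∀ n : ℕ,
    2 * lucasU P (n + 1) = lucasV P (-1) n + P * lucasU P n := by
  intro n
  induction n using Nat.twoStepInduction with
  | zero => simp [V0, lucasU]
  | one =>
      show 2 * lucasU P 2 = lucasV P (-1) 1 + P * lucasU P 1
      simp [lucasU, V1]; ring
  | more m ih1 ih2 =>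
      have hr : lucasU P (m+1+1) = P * lucasU P (m+1) + lucasU P m := Urec P m
      rw [show m + 2 + 1 = (m + 1) + 2 from rfl, Urec, Vrec]
      linear_combination P * ih2 + ih1 - P * hr

/-- norm: V n ^2 - (P^2+4) U n ^2 = 4 (-1)^n -/
lemma norm_eq (P : ℤ) : ∀ n : ℕ,
    lucasV P (-1) n ^ 2 - (P ^ 2 + 4) * lucasU P n ^ 2 = 4 * (-1 : ℤ) ^ n := by
  intro n
  induction n with
  | zero => simp [V0, lucasU]
  | succ m ih =>
      have h1 := halfV P m
      have h2 := halfU P m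
      have hh : 4 * (lucasV P (-1) (m+1) ^ 2) - 4 * ((P ^ 2 + 4) * lucasU P (m+1) ^ 2)
          = 4 * (4 * (-1 : ℤ) ^ (m+1)) := by
        linear_combination (2 * lucasV P (-1) (m+1) + P * lucasV P (-1) m + (P ^ 2 + 4) * lucasU P m) * h1
          - (P ^ 2 + 4) * (2 * lucasU P (m+1) + lucasV P (-1) m + P * lucasU P m) * h2
          - 4 * ih
      linarith [hh]

/-- shift by 2: 2 V(n+2) = (P^2+2) V n + P (P^2+4) U n -/
lemma shiftV (P : ℤ) (n : ℕ) :
    2 * lucasV P (-1) (n + 2) = (P ^ 2 + 2) * lucasV P (-1) n + P * (P ^ 2 + 4) * lucasU P n := by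
  have h1 := halfV P n
  rw [Vrec]
  linear_combination P * h1

lemma shiftU (P : ℤ) (n : ℕ) :
    2 * lucasU P (n + 2) = (P ^ 2 + 2) * lucasU P n + P * lucasV P (-1) n := by
  have h2 := halfU P n
  rw [Urec]
  linear_combination P * h2

/-- downshift: (P^2+2) U(n+2) - P V(n+2) = 2 U n -/
lemma downU (P : ℤ) (n : ℕ) :
    (P ^ 2 + 2) * lucasU P (n + 2) - P * lucasV P (-1) (n + 2) = 2 * lucasU P n := by
  have hV := shiftV P n
  have hU := shiftU P n
  have : 2 * ((P ^ 2 + 2) * lucasU P (n + 2) - P * lucasV P (-1) (n + 2)) = 2 * (2 * lucasU P n) := by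
    linear_combination (P^2+2) * hU - P * hV
  linarith

/-- downshift V: (P^2+4) U (n+1) - P V (n+1) = 2 V n -/
lemma downV (P : ℤ) (n : ℕ) :
    (P ^ 2 + 4) * lucasU P (n + 1) - P * lucasV P (-1) (n + 1) = 2 * lucasV P (-1) n := by
  have h1 := halfV P n
  have h2 := halfU P n
  have : 2 * ((P ^ 2 + 4) * lucasU P (n + 1) - P * lucasV P (-1) (n + 1)) = 2 * (2 * lucasV P (-1) n) := by
    linear_combination (P^2+4) * h2 - P * h1
  linarith

/-- U nonneg & monotone facts for P ≥ 1 -/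
lemma U_nonneg (P : ℤ) (hP : 1 ≤ P) : ∀ n : ℕ, 0 ≤ lucasU P n := by
  intro n
  induction n using Nat.twoStepInduction with
  | zero => simp [lucasU]
  | one => simp [lucasU]
  | more m ih1 ih2 =>
      rw [Urec]
      nlinarith

lemma U_le_U_add_two (P : ℤ) (hP : 1 ≤ P) (n : ℕ) : lucasU P n ≤ lucasU P (n + 2) := by
  rw [Urec]
  nlinarith [U_nonneg P hP (n+1), U_nonneg P hP n]

lemma V_pos (P : ℤ) (hP : 1 ≤ P) : ∀ n : ℕ, 0 < lucasV P (-1) n := by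
  intro n
  induction n using Nat.twoStepInduction with
  | zero => simp [V0]
  | one => simp [V1]; omega
  | more m ih1 ih2 => rw [Vrec]; nlinarith

lemma U_pos (P : ℤ) (hP : 1 ≤ P) (n : ℕ) : 0 < lucasU P (n + 1) := by
  have := halfU P n
  have := V_pos P hP n
  have := U_nonneg P hP n
  nlinarith

/-- sign flip of P -/
lemma V_neg (P : ℤ) : ∀ n : ℕ, lucasV (-P) (-1) n = (-1) ^ n * lucasV P (-1) n := by
  intro n
  induction n using Nat.twoStepInduction with
  | zero => simp [V0]
  | one => simp [V1]
  | more m ih1 ih2 => rw [Vrec, Vrec, ih1, ih2]; ring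


lemma pell_classify (P : ℤ) (hP : 1 ≤ P) (hPodd : Odd P) :
    ∀ T : ℕ, ∀ e t : ℤ, 0 ≤ e → 1 ≤ t → t ≤ (T : ℤ) → e ^ 2 + 4 = (P ^ 2 + 4) * t ^ 2 →
    ∃ k : ℕ, e = lucasV P (-1) (2 * k + 1) ∧ t = lucasU P (2 * k + 1) := by
  intro T
  induction T with
  | zero => intro e t he ht hT _; exfalso; push_cast at hT; omega
  | succ T ih =>
    intro e t he ht hT heq
    push_cast at hT
    by_cases h1 : t = 1
    · subst h1
      have hsq : (e - P) * (e + P) = 0 := by linear_combination heq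
      have heP : e = P := by
        rcases mul_eq_zero.mp hsq with h | h
        · linarith
        · exfalso; linarith
      exact ⟨0, by simpa [V1] using heP, rfl⟩
    · have ht2 : 2 ≤ t := by omega
      -- parity facts
      have hPodd' : ¬ Even P := Int.not_even_iff_odd.mpr hPodd
      have hiff : (Even e ↔ Even t) := by
        have hc : Even (e ^ 2 + 4) ↔ Even ((P ^ 2 + 4) * t ^ 2) := by rw [heq]
        simpa [parity_simps, hPodd', (by decide : Even (4:ℤ))] using hc
      have hev1 : Even (e * (P ^ 2 + 2) - t * (P * (P ^ 2 + 4))) := by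
        simp [parity_simps, hPodd', hiff, (by decide : Even (4:ℤ))]
      have hev2 : Even (t * (P ^ 2 + 2) - e * P) := by
        simp [parity_simps, hPodd', hiff, (by decide : Even (4:ℤ))]
      obtain ⟨e'0, he'0⟩ := hev1
      obtain ⟨t'0, ht'0⟩ := hev2
      set e' := e'0 with he'def
      set t' := t'0 with ht'def
      have he' : 2 * e' = e * (P ^ 2 + 2) - t * (P * (P ^ 2 + 4)) := by rw [he'0]; ring
      have ht' : 2 * t' = t * (P ^ 2 + 2) - e * P := by rw [ht'0]; ring
      -- norm equation for (e', t')
      have hnorm : e' ^ 2 + 4 = (P ^ 2 + 4) * t' ^ 2 := by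
        have h4 : (4 : ℤ) * (e' ^ 2 + 4) = 4 * ((P ^ 2 + 4) * t' ^ 2) := by
          have hA : (2 * e') ^ 2 + 16 - (P ^ 2 + 4) * (2 * t') ^ 2 = 0 := by
            rw [he', ht']
            linear_combination 4 * heq
          linarith [hA]
        linarith [h4]
      -- bounds
      have hsq1 : (t * (P ^ 2 + 2)) ^ 2 - (e * P) ^ 2 = 4 * t ^ 2 + 4 * P ^ 2 := by
        linear_combination (-(P ^ 2)) * heq
      have htA_pos : 0 < t * (P ^ 2 + 2) := by positivity
      have heP_nonneg : 0 ≤ e * P := by positivity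
      have hgt : e * P < t * (P ^ 2 + 2) := by nlinarith
      have ht'pos : 1 ≤ t' := by nlinarith [ht', hgt]
      have hetP : t * P < e := by nlinarith [heq]
      have ht'lt : t' < t := by nlinarith [ht', hetP, hP]
      -- apply induction hypothesis to (|e'|, t')
      have hnorm' : |e'| ^ 2 + 4 = (P ^ 2 + 4) * t' ^ 2 := by rw [sq_abs]; exact hnorm
      obtain ⟨k, hk1, hk2⟩ := ih |e'| t' (abs_nonneg _) ht'pos (by omega) hnorm'
      -- reconstruction
      have h2e : 2 * e = e' * (P ^ 2 + 2) + t' * (P * (P ^ 2 + 4)) := by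
        have : 2 * (2 * e) = 2 * (e' * (P ^ 2 + 2) + t' * (P * (P ^ 2 + 4))) := by
          linear_combination (-(P ^ 2 + 2)) * he' + (-(P * (P ^ 2 + 4))) * ht'
        linarith
      have h2t : 2 * t = t' * (P ^ 2 + 2) + e' * P := by
        have : 2 * (2 * t) = 2 * (t' * (P ^ 2 + 2) + e' * P) := by
          linear_combination (-(P ^ 2 + 2)) * ht' + (-P) * he'
        linarith
      rcases le_or_gt 0 e' with hpos | hneg
      · have he'val : e' = lucasV P (-1) (2 * k + 1) := by rwa [abs_of_nonneg hpos] at hk1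
        refine ⟨k + 1, ?_, ?_⟩
        · have hs := shiftV P (2 * k + 1)
          have : 2 * e = 2 * lucasV P (-1) (2 * k + 1 + 2) := by
            rw [h2e, he'val, hk2, hs]; ring
          have he2 : e = lucasV P (-1) (2 * k + 1 + 2) := by linarith
          rw [show 2 * (k + 1) + 1 = 2 * k + 1 + 2 from by omega]; exact he2
        · have hs := shiftU P (2 * k + 1)
          have : 2 * t = 2 * lucasU P (2 * k + 1 + 2) := by
            rw [h2t, he'val, hk2, hs]; ring
          have ht2' : t = lucasU P (2 * k + 1 + 2) := by linarith
          rw [show 2 * (k + 1) + 1 = 2 * k + 1 + 2 from by omega]; exact ht2'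
      · have he'val : e' = -lucasV P (-1) (2 * k + 1) := by
          rw [abs_of_neg hneg] at hk1; linarith
        exfalso
        cases k with
        | zero =>
          have hU1 : lucasU P (2 * 0 + 1) = 1 := rfl
          rw [he'val, hk2, hU1, V1] at h2t
          ring_nf at h2t
          omega
        | succ j =>
          have hidx : 2 * (j + 1) + 1 = (2 * j + 1) + 2 := by ring
          have hd := downU P (2 * j + 1)
          have : 2 * t = 2 * lucasU P (2 * j + 1) := by
            rw [h2t, he'val, hk2, hidx]
            linarith [hd]
          have htU : t = lucasU P (2 * j + 1) := by linarith
          have hmono := U_le_U_add_two P hP (2 * j + 1)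
          rw [← hidx] at hmono
          rw [← hk2] at hmono
          linarith

lemma classify (P : ℤ) (hP : 1 ≤ P) (hPodd : Odd P) (hsf : Squarefree (P ^ 2 + 4))
    (x y : ℤ) (hx : 0 < x) (hxy : x ≤ y)
    (h : x ^ 2 - (P ^ 2 + 2) * (x * y) + y ^ 2 + ((P ^ 2 + 2) ^ 2 - 4) = 0) :
    ∃ k : ℕ, x = lucasV P (-1) (2 * k) ∧ y = lucasV P (-1) (2 * k + 2) := by
  have hy : 0 < y := lt_of_lt_of_le hx hxy
  have key : P ^ 2 * (x * y) = (y - x) ^ 2 + P ^ 2 * (P ^ 2 + 4) := by linear_combination -h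
  have hdvd : (P : ℤ) ^ 2 ∣ (y - x) ^ 2 := ⟨x * y - (P ^ 2 + 4), by linear_combination -key⟩
  have hPdvd : P ∣ (y - x) := (Int.pow_dvd_pow_iff two_ne_zero).mp hdvd
  obtain ⟨e, he⟩ := hPdvd
  have he0 : 0 ≤ e := by
    by_contra hc
    push_neg at hc
    have h1 : e ≤ -1 := by omega
    have h2 : P * e ≤ P * (-1) := by
      exact mul_le_mul_of_nonneg_left h1 (by linarith)
    have : y - x ≥ 0 := by linarith
    rw [he] at this
    linarith
  have hxy2 : x * y = e ^ 2 + P ^ 2 + 4 := by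
    have hPne : (P : ℤ) ^ 2 ≠ 0 := pow_ne_zero 2 (by linarith)
    refine mul_left_cancel₀ hPne ?_
    calc P ^ 2 * (x * y) = (y - x) ^ 2 + P ^ 2 * (P ^ 2 + 4) := key
    _ = (P * e) ^ 2 + P ^ 2 * (P ^ 2 + 4) := by rw [← he]
    _ = P ^ 2 * (e ^ 2 + P ^ 2 + 4) := by ring
  have hs : (2 * x + P * e) ^ 2 = (P ^ 2 + 4) * (e ^ 2 + 4) := by
    linear_combination 4 * hxy2 - (4 * x) * he
  have hsdvd : (P ^ 2 + 4) ∣ (2 * x + P * e) ^ 2 := ⟨e ^ 2 + 4, hs⟩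
  have hsdvd' : (P ^ 2 + 4) ∣ (2 * x + P * e) :=
    (hsf.dvd_pow_iff_dvd two_ne_zero).mp hsdvd
  obtain ⟨t, ht⟩ := hsdvd'
  have hspos : 0 < 2 * x + P * e := by nlinarith
  have htpos : 1 ≤ t := by nlinarith [ht, hspos]
  have hDt : e ^ 2 + 4 = (P ^ 2 + 4) * t ^ 2 := by
    have hDne : (P : ℤ) ^ 2 + 4 ≠ 0 := by positivity
    refine mul_left_cancel₀ hDne ?_
    have h2 : ((P ^ 2 + 4) * t) ^ 2 = (P ^ 2 + 4) * (e ^ 2 + 4) := by rw [← ht]; exact hs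
    linear_combination -h2
  obtain ⟨k, hk1, hk2⟩ := pell_classify P hP hPodd t.toNat e t he0 htpos (Int.self_le_toNat t) hDt
  have hdV := downV P (2 * k)
  have h2x : 2 * x = 2 * lucasV P (-1) (2 * k) := by
    have hx2 : 2 * x = (P ^ 2 + 4) * t - P * e := by linarith [ht]
    rw [hx2, hk1, hk2]
    linarith [hdV]
  have hxV : x = lucasV P (-1) (2 * k) := by linarith
  refine ⟨k, hxV, ?_⟩
  have hyy : y = x + P * e := by linarith [he]
  rw [hyy, hxV, hk1, Vrec]
  ring

open ArithmeticFunction in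
lemma sigma_two_prime (p : ℕ) (hp : p.Prime) : ArithmeticFunction.sigma 2 p = 1 + p ^ 2 := by
  rw [ArithmeticFunction.sigma_apply, hp.divisors, Finset.sum_pair hp.one_lt.ne]
  norm_num

open ArithmeticFunction in
lemma sigma_two_prime_sq (p : ℕ) (hp : p.Prime) :
    ArithmeticFunction.sigma 2 (p ^ 2) = 1 + p ^ 2 + (p ^ 2) ^ 2 := by
  rw [ArithmeticFunction.sigma_apply_prime_pow hp]
  rw [Finset.sum_range_succ, Finset.sum_range_succ, Finset.sum_range_succ, Finset.sum_range_zero]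
  ring

open ArithmeticFunction in
lemma sigma_two_mul (p q : ℕ) (hp : p.Prime) (hq : q.Prime) (hne : p ≠ q) :
    ArithmeticFunction.sigma 2 (p * q) = (1 + p ^ 2) * (1 + q ^ 2) := by
  rw [ArithmeticFunction.isMultiplicative_sigma.map_mul_of_coprime
    ((Nat.coprime_primes hp hq).mpr hne), sigma_two_prime p hp, sigma_two_prime q hq]

open ArithmeticFunction in
lemma sigma_two_lower (n d : ℕ) (hd : d ∣ n) (hd1 : 1 < d) (hdn : d < n) :
    1 + d ^ 2 + n ^ 2 ≤ ArithmeticFunction.sigma 2 n := by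
  have hn0 : n ≠ 0 := by omega
  rw [ArithmeticFunction.sigma_apply]
  have hsub : ({1, d, n} : Finset ℕ) ⊆ n.divisors := by
    intro x hx
    simp only [Finset.mem_insert, Finset.mem_singleton] at hx
    rcases hx with rfl | rfl | rfl
    · exact Nat.one_mem_divisors.mpr hn0
    · exact Nat.mem_divisors.mpr ⟨hd, hn0⟩
    · exact Nat.mem_divisors.mpr ⟨dvd_rfl, hn0⟩
  have h1 : (1 : ℕ) ∉ ({d, n} : Finset ℕ) := by
    simp only [Finset.mem_insert, Finset.mem_singleton]
    omega
  have h2 : d ∉ ({n} : Finset ℕ) := by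
    simp only [Finset.mem_singleton]; omega
  calc 1 + d ^ 2 + n ^ 2 = ∑ x ∈ ({1, d, n} : Finset ℕ), x ^ 2 := by
        rw [Finset.sum_insert h1, Finset.sum_insert h2, Finset.sum_singleton]; ring
  _ ≤ ∑ x ∈ n.divisors, x ^ 2 := Finset.sum_le_sum_of_subset hsub

lemma V_abs_even (P : ℤ) (k : ℕ) : lucasV |P| (-1) (2 * k) = lucasV P (-1) (2 * k) := by
  rcases abs_choice P with h | h
  · rw [h]
  · rw [h, V_neg]
    have : ((-1 : ℤ)) ^ (2 * k) = 1 := by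
      rw [pow_mul]; norm_num
    rw [this, one_mul]

lemma cube_facts (c : ℤ) (hc : 1 ≤ c) :
    (7 : ℤ) ≤ c ^ 2 + 5 * c + 1 ∧ (c ^ 2 + 5 * c + 1 : ℤ) ≤ (c ^ 2 + 5 * c + 1) ^ 3 := by
  constructor
  · nlinarith
  · have hb7 : (7 : ℤ) ≤ c ^ 2 + 5 * c + 1 := by nlinarith
    nlinarith [hb7, sq_nonneg (c ^ 2 + 5 * c + 1)]

lemma contra1 (c nz : ℤ) (hc : 1 ≤ c) (hbig : (c ^ 2 + 5 * c + 1) ^ 3 < nz)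
    (hkey : (c + 2) * nz = c ^ 2 + 4 * c) : False := by
  obtain ⟨hb7, hbbig⟩ := cube_facts c hc
  have hnpos : (0 : ℤ) < nz := by linarith
  have h1 : nz ≤ (c + 2) * nz := by nlinarith
  linarith

lemma contra2 (c nz : ℤ) (hc : 1 ≤ c) (hbig : (c ^ 2 + 5 * c + 1) ^ 3 < nz)
    (hkey : (c + 1) * nz = c ^ 2 + 4 * c) : False := by
  obtain ⟨hb7, hbbig⟩ := cube_facts c hc
  have hnpos : (0 : ℤ) < nz := by linarith
  have h1 : nz ≤ (c + 1) * nz := by nlinarith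
  linarith

lemma contra3 (c pz nz : ℤ) (hc : 1 ≤ c) (hbig : (c ^ 2 + 5 * c + 1) ^ 3 < nz)
    (hp2 : 2 ≤ pz) (hnp3 : pz ^ 3 ≤ nz) (hnlt : nz < (c + 2) * pz ^ 2) : False := by
  obtain ⟨hb7, hbbig⟩ := cube_facts c hc
  have hpltc : pz < c + 2 := by
    by_contra hcon
    push_neg at hcon
    have h1 : (c + 2) * pz ^ 2 ≤ pz * pz ^ 2 := mul_le_mul_of_nonneg_right hcon (by positivity)
    have h2 : pz * pz ^ 2 = pz ^ 3 := by ring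
    linarith
  have hle : pz ≤ c + 1 := by omega
  have hsq : pz ^ 2 ≤ (c + 1) ^ 2 := pow_le_pow_left₀ (by linarith) hle 2
  have h3 : (c + 2) * pz ^ 2 ≤ (c + 2) * (c + 1) ^ 2 := by
    apply mul_le_mul_of_nonneg_left hsq (by linarith)
  have h4 : (c + 2) * (c + 1) ^ 2 < (c + 2) ^ 3 := by nlinarith
  have h5 : (c + 2 : ℤ) ^ 3 ≤ (c ^ 2 + 5 * c + 1) ^ 3 := by
    apply pow_le_pow_left₀ (by linarith)
    nlinarith
  linarith


end StmtAux

open StmtAux in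
theorem stmt_3 (P : ℤ) (hsf : Squarefree (P ^ 2 + 4))
    (A B : ℤ) (hA : A = P ^ 2 + 2) (hB : B = -P ^ 4 - 4 * P ^ 2 + 1)
    (n : ℕ) (hn : 0 < n) (hbig : (n : ℤ) > (|A| + |B|) ^ 3)
    (heq : ((ArithmeticFunction.sigma 2) n : ℤ) - (n : ℤ) ^ 2 = A * n + B) :
    ∃ k : ℕ,
      (n : ℤ) = lucasV P (-1) (2 * k) * lucasV P (-1) (2 * k + 2) ∧
      Prime (lucasV P (-1) (2 * k)) ∧ Prime (lucasV P (-1) (2 * k + 2)) := by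
  subst hA hB
  -- P is odd
  have hPodd : Odd P := by
    rcases Int.even_or_odd P with ⟨c, rfl⟩ | h
    · exfalso
      have h4 : (2 : ℤ) * 2 ∣ (c + c) ^ 2 + 4 := ⟨c ^ 2 + 1, by ring⟩
      have := hsf 2 h4
      norm_num [Int.isUnit_iff] at this
    · exact h
  have hP0 : P ≠ 0 := by
    rintro rfl
    norm_num [Int.not_odd_iff_even.mpr (by exact ⟨0, rfl⟩ : Even (0:ℤ))] at hPodd
  have hcP : (1 : ℤ) ≤ P ^ 2 := by
    nlinarith [Int.one_le_abs hP0, sq_abs P, abs_nonneg P]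
  obtain ⟨c, hcdef⟩ : ∃ c : ℤ, c = P ^ 2 := ⟨P ^ 2, rfl⟩
  rw [show (-P ^ 4 - 4 * P ^ 2 + 1 : ℤ) = -c ^ 2 - 4 * c + 1 from by rw [hcdef]; ring,
      show (P ^ 2 + 2 : ℤ) = c + 2 from by rw [hcdef]] at heq hbig
  have hc : (1 : ℤ) ≤ c := by rw [hcdef]; exact hcP
  rw [show |(c + 2 : ℤ)| = c + 2 from abs_of_pos (by linarith),
      show |(-c ^ 2 - 4 * c + 1 : ℤ)| = c ^ 2 + 4 * c - 1 from by
        rw [abs_of_neg (by nlinarith [sq_nonneg c])]; ring,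
      show (c + 2 + (c ^ 2 + 4 * c - 1) : ℤ) = c ^ 2 + 5 * c + 1 from by ring] at hbig
  have hbig' : ((c ^ 2 + 5 * c + 1) ^ 3 : ℤ) < (n : ℤ) := hbig
  have hb7 : (7 : ℤ) ≤ c ^ 2 + 5 * c + 1 := by nlinarith
  have hb49 : (49 : ℤ) ≤ (c ^ 2 + 5 * c + 1) ^ 2 := by nlinarith [hb7]
  have hbbig : (c ^ 2 + 5 * c + 1 : ℤ) ≤ (c ^ 2 + 5 * c + 1) ^ 3 := by nlinarith [hb7, hb49]
  have hb343 : (343 : ℤ) ≤ (c ^ 2 + 5 * c + 1) ^ 3 := by nlinarith [hb7, hb49]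
  have hn2 : 2 ≤ n := by
    have h2z : (2 : ℤ) ≤ (n : ℤ) := by linarith
    exact_mod_cast h2z
  -- minimal prime factor decomposition
  set p : ℕ := n.minFac with hpdef
  have hp : p.Prime := Nat.minFac_prime (by omega)
  have hpd : p ∣ n := Nat.minFac_dvd n
  set m : ℕ := n / p with hmdef
  have hnm : n = p * m := (Nat.mul_div_cancel' hpd).symm
  clear_value p m
  have hp2 : 2 ≤ p := hp.two_le
  have hm1 : 1 ≤ m := by
    rcases Nat.eq_zero_or_pos m with h0 | h1
    · rw [h0, Nat.mul_zero] at hnm; omega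
    · exact h1
  by_cases hm : m = 1
  · -- n is prime
    exfalso
    rw [hm, Nat.mul_one] at hnm
    have hnprime : n.Prime := by rw [hnm]; exact hp
    have hsig : ArithmeticFunction.sigma 2 n = 1 + n ^ 2 := sigma_two_prime n hnprime
    rw [hsig] at heq
    push_cast at heq
    -- heq : 1 + n^2 - n^2 = (c+2) n + (-c^2 - 4c + 1)
    have hkey : (c + 2) * (n : ℤ) = c ^ 2 + 4 * c := by linarith
    exact contra1 c n hc hbig' hkey
  · -- m ≥ 2
    have hm2 : 2 ≤ m := by omega
    have hmdvd : m ∣ n := ⟨p, by rw [hnm, Nat.mul_comm]⟩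
    have hmlt : m < n := by
      calc m < 2 * m := by omega
      _ ≤ p * m := Nat.mul_le_mul_right m hp2
      _ = n := hnm.symm
    have hlow := sigma_two_lower n m hmdvd (by omega) hmlt
    have hlowz : (1 : ℤ) + (m : ℤ) ^ 2 + (n : ℤ) ^ 2 ≤ ((ArithmeticFunction.sigma 2 n : ℕ) : ℤ) := by
      exact_mod_cast hlow
    have hmAn : ((m : ℤ)) ^ 2 < (c + 2) * n := by nlinarith [hlowz, heq]
    have hnpm : (n : ℤ) = (p : ℤ) * m := by exact_mod_cast hnm
    have hpz2 : (2 : ℤ) ≤ (p : ℤ) := by exact_mod_cast hp2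
    have hmz2 : (2 : ℤ) ≤ (m : ℤ) := by exact_mod_cast hm2
    have hmAp : (m : ℤ) < (c + 2) * p := by
      by_contra hcon
      push_neg at hcon
      have h2 : ((c + 2) * (p : ℤ)) * m ≤ (m : ℤ) * m :=
        mul_le_mul_of_nonneg_right hcon (by linarith)
      have h3 : (c + 2) * (n : ℤ) = ((c + 2) * p) * m := by rw [hnpm]; ring
      linarith [hmAn, h2, h3, (by ring : (m : ℤ) * m = (m : ℤ) ^ 2)]
    by_cases hq : m.Prime
    · -- n = p * q with q prime
      by_cases hpq : p = m
      · -- n = p^2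
        exfalso
        have hnp2 : n = p ^ 2 := by rw [hnm, ← hpq]; ring
        have hsig : ArithmeticFunction.sigma 2 n = 1 + p ^ 2 + (p ^ 2) ^ 2 :=
          hnp2 ▸ sigma_two_prime_sq p hp
        rw [hsig] at heq
        have hnp2z : (n : ℤ) = (p : ℤ) ^ 2 := by exact_mod_cast hnp2
        push_cast at heq
        rw [← hnp2z] at heq
        -- heq : 1 + n + n^2 - n^2 = (c+2) n + (-c^2-4c+1)
        have hkey : (c + 1) * (n : ℤ) = c ^ 2 + 4 * c := by linarith
        exact contra2 c n hc hbig' hkey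
      · -- distinct primes
        have hple : p ≤ m := by rw [hpdef]; exact Nat.minFac_le_of_dvd hq.two_le hmdvd
        have hsig : ArithmeticFunction.sigma 2 n = (1 + p ^ 2) * (1 + m ^ 2) := by
          rw [hnm]; exact sigma_two_mul p m hp hq hpq
        rw [hsig] at heq
        push_cast at heq
        -- prepare for classify
        have hPabs : (1 : ℤ) ≤ |P| := Int.one_le_abs hP0
        have hPabsodd : Odd |P| := by
          rcases abs_choice P with h | h
          · rw [h]; exact hPodd
          · rw [h]; exact hPodd.neg
        have hsfabs : Squarefree (|P| ^ 2 + 4) := by rw [sq_abs]; exact hsf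
        have hquad : ((p : ℤ)) ^ 2 - (|P| ^ 2 + 2) * ((p : ℤ) * (m : ℤ)) + ((m : ℤ)) ^ 2
            + ((|P| ^ 2 + 2) ^ 2 - 4) = 0 := by
          rw [sq_abs]
          have hcc : c = P ^ 2 := hcdef
          rw [← hcc]
          linear_combination heq + (c + 2 + (n : ℤ) + (p : ℤ) * (m : ℤ)) * hnpm
        have hplez : ((p : ℤ)) ≤ (m : ℤ) := by exact_mod_cast hple
        have hpz0 : (0 : ℤ) < (p : ℤ) := by linarith
        obtain ⟨k, hk1, hk2⟩ := classify |P| hPabs hPabsodd hsfabs (p : ℤ) (m : ℤ) hpz0 hplez hquad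
        refine ⟨k, ?_, ?_, ?_⟩
        · rw [← V_abs_even P k, ← hk1]
          rw [show 2 * k + 2 = 2 * (k + 1) from by omega, ← V_abs_even P (k + 1)]
          rw [show 2 * (k + 1) = 2 * k + 2 from by omega, ← hk2]
          exact hnpm
        · rw [← V_abs_even P k, ← hk1]
          exact Nat.prime_iff_prime_int.mp hp
        · rw [show 2 * k + 2 = 2 * (k + 1) from by omega, ← V_abs_even P (k + 1),
            show 2 * (k + 1) = 2 * k + 2 from by omega, ← hk2]
          exact Nat.prime_iff_prime_int.mp hq
    · -- m composite: contradiction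
      exfalso
      have hmf := Nat.minFac_sq_le_self (by omega : 0 < m) hq
      have hpmf : p ≤ m.minFac := by
        rw [hpdef]
        exact Nat.minFac_le_of_dvd (Nat.minFac_prime (by omega : m ≠ 1)).two_le
          ((Nat.minFac_dvd m).trans hmdvd)
      have hp2m : p ^ 2 ≤ m := le_trans (Nat.pow_le_pow_left hpmf 2) hmf
      have hp2mz : ((p : ℤ)) ^ 2 ≤ (m : ℤ) := by exact_mod_cast hp2m
      have hnp3 : ((p : ℤ)) ^ 3 ≤ (n : ℤ) := by
        have h1 : (p : ℤ) * (p : ℤ) ^ 2 ≤ (p : ℤ) * m :=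
          mul_le_mul_of_nonneg_left hp2mz (by linarith)
        have h2 : (p : ℤ) * (p : ℤ) ^ 2 = (p : ℤ) ^ 3 := by ring
        linarith [hnpm]
      have hnlt : (n : ℤ) < (c + 2) * (p : ℤ) ^ 2 := by
        have h1 : (p : ℤ) * m < (p : ℤ) * ((c + 2) * p) :=
          mul_lt_mul_of_pos_left hmAp (by linarith)
        have h2 : (p : ℤ) * ((c + 2) * p) = (c + 2) * (p : ℤ) ^ 2 := by ring
        linarith [hnpm]
      exact contra3 c p n hc hbig' hpz2 hnp3 hnlt
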